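/- The gas-to-power conversion function P(q) (linear with slope E_PtG for q ≤ −κ, cubic Hermite interpolant on [−κ,κ], linear with slope E_GtP for q ≥ κ) is monotone increasing on ℝ provided E_PtG, E_GtP > 0 and E_PtG and E_GtP do not differ by more than a factor of 3 (sufficient condition for the Hermite cubic's derivative to remain positive on [−κ,κ]). -/
import Mathlib


/-- If the two conversion efficiencies are positive and differ by at most a
factor of `3`, then the piecewise gas-to-power conversion function (linear with
slope `E_PtG` for `q ≤ -κ`, cubic Hermite interpolant on `[-κ, κ]`, linear with
slope `E_GtP` for `q ≥ κ`) is monotone increasing on `ℝ`. -/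
theorem gas_to_power_monotone (κ EPtG EGtP : ℝ) (hκ : 0 < κ)
    (hP : 0 < EPtG) (hG : 0 < EGtP)
    (hratio : max EPtG EGtP ≤ 3 * min EPtG EGtP)
    (pol : Polynomial ℝ) (hdeg : pol.degree ≤ 3)
    (hv₁ : pol.eval (-κ) = -EPtG * κ) (hd₁ : pol.derivative.eval (-κ) = EPtG)
    (hv₂ : pol.eval κ = EGtP * κ) (hd₂ : pol.derivative.eval κ = EGtP) :
    Monotone (fun q : ℝ =>
      if q < -κ then EPtG * q else if q ≤ κ then pol.eval q else EGtP * q) := by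
  have hnd3 : pol.natDegree ≤ 3 := Polynomial.natDegree_le_iff_degree_le.mpr hdeg
  have hnd : pol.natDegree < 4 := by omega
  obtain ⟨a, b, c, d, heval, hdev⟩ :
      ∃ a b c d : ℝ, (∀ x : ℝ, pol.eval x = d + c * x + b * x ^ 2 + a * x ^ 3) ∧
        (∀ x : ℝ, pol.derivative.eval x = c + 2 * b * x + 3 * a * x ^ 2) := by
    refine ⟨pol.coeff 3, pol.coeff 2, pol.coeff 1, pol.coeff 0, ?_, ?_⟩
    · intro x
      rw [Polynomial.eval_eq_sum_range' hnd]
      simp only [Finset.sum_range_succ, Finset.sum_range_zero, zero_add]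
      ring
    · intro x
      have hnd' : pol.derivative.natDegree < 4 :=
        lt_of_le_of_lt (Polynomial.natDegree_derivative_le pol) (by omega)
      have h4 : pol.coeff 4 = 0 := Polynomial.coeff_eq_zero_of_natDegree_lt hnd
      rw [Polynomial.eval_eq_sum_range' hnd']
      simp only [Finset.sum_range_succ, Finset.sum_range_zero, zero_add,
        Polynomial.coeff_derivative, h4]
      push_cast
      ring
  have e₁ := hv₁; rw [heval] at e₁
  have e₂ := hv₂; rw [heval] at e₂
  have f₁ := hd₁; rw [hdev] at f₁
  have f₂ := hd₂; rw [hdev] at f₂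
  have hκ3 : κ ^ 3 ≠ 0 := by positivity
  have ha : a = 0 := by
    have h : a * κ ^ 3 = 0 := by
      linear_combination (e₂ - e₁ - κ * f₁ - κ * f₂) * (-1 / 4)
    rcases mul_eq_zero.mp h with h' | h'
    · exact h'
    · exact absurd h' hκ3
  have g₁ : c - 2 * b * κ = EPtG := by linear_combination f₁ - 3 * κ ^ 2 * ha
  have g₂ : c + 2 * b * κ = EGtP := by linear_combination f₂ - 3 * κ ^ 2 * ha
  have key : ∀ x y : ℝ, -κ ≤ x → x ≤ y → y ≤ κ → pol.eval x ≤ pol.eval y := by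
    intro x y hx hxy hy
    rw [heval, heval]
    have hid : 4 * κ * ((d + c * y + b * y ^ 2 + a * y ^ 3)
          - (d + c * x + b * x ^ 2 + a * x ^ 3))
        = (y - x) * (2 * κ + x + y) * EGtP + (y - x) * (2 * κ - x - y) * EPtG := by
      linear_combination ((y - x) * (2 * κ + x + y)) * g₂
        + ((y - x) * (2 * κ - x - y)) * g₁ + (4 * κ * (y ^ 3 - x ^ 3)) * ha
    have h1 : 0 ≤ (y - x) * (2 * κ + x + y) * EGtP :=
      mul_nonneg (mul_nonneg (by linarith) (by linarith)) hG.le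
    have h2 : 0 ≤ (y - x) * (2 * κ - x - y) * EPtG :=
      mul_nonneg (mul_nonneg (by linarith) (by linarith)) hP.le
    nlinarith [hid, h1, h2, hκ]
  intro q₁ q₂ h12
  dsimp only
  split_ifs with h1 h2 h3 h4 h5 h6 h7 h8
  · exact mul_le_mul_of_nonneg_left h12 hP.le
  · calc EPtG * q₁ ≤ EPtG * (-κ) := mul_le_mul_of_nonneg_left h1.le hP.le
      _ = pol.eval (-κ) := by rw [hv₁]; ring
      _ ≤ pol.eval q₂ := key (-κ) q₂ le_rfl (not_lt.mp h2) h3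
  · calc EPtG * q₁ ≤ EPtG * (-κ) := mul_le_mul_of_nonneg_left h1.le hP.le
      _ = pol.eval (-κ) := by rw [hv₁]; ring
      _ ≤ pol.eval κ := key (-κ) κ le_rfl (by linarith) le_rfl
      _ = EGtP * κ := hv₂
      _ ≤ EGtP * q₂ := mul_le_mul_of_nonneg_left (not_le.mp h3).le hG.le
  · exact absurd (lt_of_le_of_lt h12 h5) h1
  · exact key q₁ q₂ (not_lt.mp h1) h12 h6
  · calc pol.eval q₁ ≤ pol.eval κ := key q₁ κ (not_lt.mp h1) h4 le_rfl
      _ = EGtP * κ := hv₂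
      _ ≤ EGtP * q₂ := mul_le_mul_of_nonneg_left (not_le.mp h6).le hG.le
  · have hq := not_le.mp h4
    linarith
  · have hq := not_le.mp h4
    linarith
  · exact mul_le_mul_of_nonneg_left h12 hG.le
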